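/- arXiv:1811.01077 — 8 statements merged into one kernel-verified Lean document; each statement's English description precedes it below -/
import Mathlib

section
/- Let p > 0 and c ≥ 0 be real numbers and let w, x, y, z be nonnegative reals with x ≥ w and z ≥ y. Let J : ℝ → ℝ be differentiable with J(0) = 0, with 0 ≤ J'(u) ≤ p for all u ≥ 0, and with J concave on [0, ∞). Then 0 ≤ −p·min(c, w+y) + p·min(c, w+z) + p·min(c, x+y) − p·min(c, x+z) − J((c−w−y)⁺) + J((c−w−z)⁺) + J((c−x−y)⁺) − J((c−x−z)⁺). -/
/-!
Writing `min c t = c - (c - t)⁺`, the expression becomes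
`F (w + y) + F (x + z) - F (w + z) - F (x + y)` with `F t = K ((c - t)⁺)` and `K u = p u - J u`.
The bounds on `J'` and the concavity of `J` make `K` convex and nondecreasing on `[0, ∞)`, so `F`
is convex on `ℝ`. Since `w + y ≤ w + z ≤ x + z` and `(w + z) + (x + y) = (w + y) + (x + z)`,
convexity of `F` gives the inequality.
-/

open Set

theorem ConvexOn.add_le_add_of_add_eq {s : Set ℝ} {f : ℝ → ℝ} (hf : ConvexOn ℝ s f)
    {a b c d : ℝ} (ha : a ∈ s) (hd : d ∈ s) (hab : a ≤ b) (hbd : b ≤ d)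
    (hsum : b + c = a + d) : f b + f c ≤ f a + f d := by
  obtain rfl | had := hab.trans hbd |>.eq_or_lt
  · obtain rfl : b = a := le_antisymm hbd hab
    obtain rfl : c = b := by linarith
    rfl
  -- `b` and `c` are the convex combinations of `a` and `d` with swapped weights.
  set θ := (d - b) / (d - a)
  have hθ₀ : 0 ≤ θ := div_nonneg (by linarith) (by linarith)
  have hθ₁ : 0 ≤ 1 - θ := by rw [sub_nonneg, div_le_one (by linarith)]; linarith
  have hb : θ • a + (1 - θ) • d = b := by simp only [θ, smul_eq_mul]; field_simp; ring
  have hc : (1 - θ) • a + θ • d = c := by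
    simp only [smul_eq_mul] at hb ⊢; linear_combination -hb - hsum
  have h₁ := hf.2 ha hd hθ₀ hθ₁ (add_sub_cancel θ 1)
  have h₂ := hf.2 ha hd hθ₁ hθ₀ (sub_add_cancel 1 θ)
  rw [hb] at h₁
  rw [hc] at h₂
  simp only [smul_eq_mul] at h₁ h₂
  linarith

theorem min_eq_sub_max_sub_zero (c t : ℝ) : min c t = c - max (c - t) 0 := by
  rcases le_total c t with h | h
  · rw [min_eq_left h, max_eq_right (by linarith), sub_zero]
  · rw [min_eq_right h, max_eq_left (by linarith), sub_sub_cancel]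

theorem ConvexOn.comp_max_sub_zero {K : ℝ → ℝ} (hK : ConvexOn ℝ (Ici 0) K)
    (hK' : MonotoneOn K (Ici 0)) (c : ℝ) :
    ConvexOn ℝ univ fun t ↦ K (max (c - t) 0) := by
  have hrange : (fun t : ℝ ↦ max (c - t) 0) '' univ = Ici 0 := by
    refine Subset.antisymm ?_ fun (u : ℝ) (hu : 0 ≤ u) ↦ ⟨c - u, mem_univ _, by simp [hu]⟩
    rintro _ ⟨t, -, rfl⟩
    exact le_max_right (c - t) 0
  have hpos : ConvexOn ℝ univ fun t : ℝ ↦ max (c - t) 0 :=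
    ((convexOn_const c convex_univ).sub (concaveOn_id convex_univ)).sup
      (convexOn_const 0 convex_univ)
  rw [← hrange] at hK hK'
  exact hK.comp hpos hK'

theorem stmt_0_general (p c w x y z : ℝ)
    (hwx : w ≤ x) (hyz : y ≤ z)
    (J : ℝ → ℝ) (hJdiff : Differentiable ℝ J)
    (hJ'le : ∀ u : ℝ, 0 ≤ u → deriv J u ≤ p)
    (hJconc : ConcaveOn ℝ (Set.Ici (0 : ℝ)) J) :
    0 ≤ -p * min c (w + y) + p * min c (w + z)
      + p * min c (x + y) - p * min c (x + z)
      - J (max (c - w - y) 0) + J (max (c - w - z) 0)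
      + J (max (c - x - y) 0) - J (max (c - x - z) 0) := by
  set K : ℝ → ℝ := fun u ↦ p * u - J u
  have hKconv : ConvexOn ℝ (Ici 0) K :=
    ((LinearMap.mulLeft ℝ p).convexOn (convex_Ici 0)).sub hJconc
  have hKmono : MonotoneOn K (Ici 0) := by
    have hKdiff : Differentiable ℝ K := (differentiable_id.const_mul p).sub hJdiff
    refine monotoneOn_of_deriv_nonneg (convex_Ici 0) hKdiff.continuous.continuousOn
      hKdiff.differentiableOn fun u hu ↦ ?_
    rw [interior_Ici] at hu
    have hK' : HasDerivAt K (p * 1 - deriv J u) u :=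
      ((hasDerivAt_id u).const_mul p).sub (hJdiff u).hasDerivAt
    linarith [hK'.deriv, hJ'le u hu.le]
  have key := (hKconv.comp_max_sub_zero hKmono c).add_le_add_of_add_eq
    (a := w + y) (b := w + z) (c := x + y) (d := x + z) (mem_univ _) (mem_univ _)
    (by linarith) (by linarith) (by ring)
  simp only [K, min_eq_sub_max_sub_zero, sub_add_eq_sub_sub] at key ⊢
  linarith

/-- Let `p > 0` and `c ≥ 0` be real numbers and let `w, x, y, z` be nonnegative
reals with `x ≥ w` and `z ≥ y`. Let `J : ℝ → ℝ` be differentiable with `J 0 = 0`, with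
`0 ≤ J' u ≤ p` for all `u ≥ 0`, and with `J` concave on `[0, ∞)`. Then
`0 ≤ −p·min(c, w+y) + p·min(c, w+z) + p·min(c, x+y) − p·min(c, x+z)
   − J((c−w−y)⁺) + J((c−w−z)⁺) + J((c−x−y)⁺) − J((c−x−z)⁺)`. -/
theorem stmt_0 (p c w x y z : ℝ) (hp : 0 < p) (hc : 0 ≤ c)
    (hw : 0 ≤ w) (hx : 0 ≤ x) (hy : 0 ≤ y) (hz : 0 ≤ z)
    (hwx : w ≤ x) (hyz : y ≤ z)
    (J : ℝ → ℝ) (hJdiff : Differentiable ℝ J) (hJ0 : J 0 = 0)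
    (hJ'nonneg : ∀ u : ℝ, 0 ≤ u → 0 ≤ deriv J u)
    (hJ'le : ∀ u : ℝ, 0 ≤ u → deriv J u ≤ p)
    (hJconc : ConcaveOn ℝ (Set.Ici (0 : ℝ)) J) :
    0 ≤ -p * min c (w + y) + p * min c (w + z)
      + p * min c (x + y) - p * min c (x + z)
      - J (max (c - w - y) 0) + J (max (c - w - z) 0)
      + J (max (c - x - y) 0) - J (max (c - x - z) 0) :=
  stmt_0_general p c w x y z hwx hyz J hJdiff hJ'le hJconc
end

section
/- Let c > 0 be a real number, T a positive integer, and p ∈ [0,1]. Let X_1, …, X_T be i.i.d. random variables taking values in [0,1] with E[X_t] = p for all t, and let Y_1, …, Y_T be i.i.d. Bernoulli random variables with success probability p. Then E[min(c, Σ_{t=1}^T X_t)] ≥ E[min(c, Σ_{t=1}^T Y_t)]. -/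
open MeasureTheory ProbabilityTheory

/-!
Write `A_ρ g s = ∫ g (s + x) dρ(x)`. For independent summands with common law `ρ`,
`E[g (∑ W_t)] = A_ρ^T g 0`, and `A_ρ` preserves concavity and Lipschitz continuity. A concave
`g` lies above its chord on `[s, s + 1]`, so if `ν` lives on `[0, 1]` and has mean `p`, then
`A_ν g s ≥ (1 - p) g s + p g (s + 1) = A_β g s`, where `β` is the Bernoulli(`p`) law. As `A_β` is
monotone, induction gives `A_β^T g ≤ A_ν^T g`; take `g = min c`.
-/

noncomputable def shiftAvg (ρ : Measure ℝ) (f : ℝ → ℝ) (s : ℝ) : ℝ := ∫ x, f (s + x) ∂ρ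

theorem LipschitzWith.integrable_comp {α : Type*} [MeasurableSpace α] {μ : Measure α}
    [IsFiniteMeasure μ] {K : NNReal} {f : ℝ → ℝ} (hf : LipschitzWith K f) {g : α → ℝ}
    (hg : Integrable g μ) : Integrable (fun a => f (g a)) μ := by
  refine ((integrable_const ‖f 0‖).add (hg.norm.const_mul K)).mono'
    (hf.continuous.comp_aestronglyMeasurable hg.1) (Filter.Eventually.of_forall fun a => ?_)
  have := hf.dist_le_mul (g a) 0
  simp only [Real.dist_eq, sub_zero, Real.norm_eq_abs, Pi.add_apply] at this ⊢
  linarith [abs_sub_abs_le_abs_sub (f (g a)) (f 0)]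

section shiftAvg

variable {ρ : Measure ℝ} [IsProbabilityMeasure ρ] {K : NNReal} {f : ℝ → ℝ}

theorem LipschitzWith.integrable_comp_add (hρ : Integrable id ρ) (hf : LipschitzWith K f)
    (s : ℝ) : Integrable (fun x => f (s + x)) ρ :=
  hf.integrable_comp ((integrable_const s).add hρ)

theorem LipschitzWith.shiftAvg (hρ : Integrable id ρ) (hf : LipschitzWith K f) :
    LipschitzWith K (shiftAvg ρ f) := by
  refine LipschitzWith.of_dist_le_mul fun s t => ?_
  rw [Real.dist_eq, _root_.shiftAvg, _root_.shiftAvg,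
    ← integral_sub (hf.integrable_comp_add hρ s) (hf.integrable_comp_add hρ t)]
  calc |∫ x, (f (s + x) - f (t + x)) ∂ρ| ≤ ∫ x, |f (s + x) - f (t + x)| ∂ρ :=
        abs_integral_le_integral_abs
    _ ≤ ∫ _, K * |s - t| ∂ρ := by
        refine integral_mono_of_nonneg (Filter.Eventually.of_forall fun _ => abs_nonneg _)
          (integrable_const _) (Filter.Eventually.of_forall fun x => ?_)
        simpa [Real.dist_eq] using hf.dist_le_mul (s + x) (t + x)
    _ = K * dist s t := by simp [Real.dist_eq]

theorem ConcaveOn.shiftAvg (hρ : Integrable id ρ) (hf : LipschitzWith K f)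
    (hfc : ConcaveOn ℝ Set.univ f) : ConcaveOn ℝ Set.univ (shiftAvg ρ f) := by
  refine ⟨convex_univ, fun x _ y _ a b ha hb hab => ?_⟩
  have hx := hf.integrable_comp_add hρ x
  have hy := hf.integrable_comp_add hρ y
  simp only [_root_.shiftAvg, smul_eq_mul]
  rw [← integral_const_mul, ← integral_const_mul,
    ← integral_add (hx.const_mul a) (hy.const_mul b)]
  refine integral_mono ((hx.const_mul a).add (hy.const_mul b)) (hf.integrable_comp_add hρ _)
    fun t => ?_
  have := hfc.2 (Set.mem_univ (x + t)) (Set.mem_univ (y + t)) ha hb hab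
  simp only [smul_eq_mul] at this
  convert this using 2
  linear_combination (-t) * hab

theorem LipschitzWith.iterate_shiftAvg (hρ : Integrable id ρ) (hf : LipschitzWith K f) (n : ℕ) :
    LipschitzWith K ((_root_.shiftAvg ρ)^[n] f) := by
  induction n with
  | zero => exact hf
  | succ n ih => rw [Function.iterate_succ_apply']; exact ih.shiftAvg hρ

theorem ConcaveOn.iterate_shiftAvg (hρ : Integrable id ρ) (hf : LipschitzWith K f)
    (hfc : ConcaveOn ℝ Set.univ f) (n : ℕ) :
    ConcaveOn ℝ Set.univ ((_root_.shiftAvg ρ)^[n] f) := by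
  induction n with
  | zero => exact hfc
  | succ n ih =>
    rw [Function.iterate_succ_apply']; exact ih.shiftAvg hρ (hf.iterate_shiftAvg hρ n)

end shiftAvg

theorem ConcaveOn.chord_le_shiftAvg {ν : Measure ℝ} [IsProbabilityMeasure ν]
    (hν : ∀ᵐ x ∂ν, x ∈ Set.Icc (0 : ℝ) 1) {K : NNReal} {f : ℝ → ℝ} (hf : LipschitzWith K f)
    (hfc : ConcaveOn ℝ Set.univ f) (s : ℝ) :
    (1 - ∫ x, x ∂ν) * f s + (∫ x, x ∂ν) * f (s + 1) ≤ _root_.shiftAvg ν f s := by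
  have hid : Integrable (fun x : ℝ => x) ν := Integrable.of_mem_Icc 0 1 aemeasurable_id hν
  have hsub : Integrable (fun x : ℝ => 1 - x) ν := (integrable_const 1).sub hid
  have hchord : Integrable (fun x => (1 - x) * f s + x * f (s + 1)) ν :=
    (hsub.mul_const _).add (hid.mul_const _)
  calc (1 - ∫ x, x ∂ν) * f s + (∫ x, x ∂ν) * f (s + 1)
      = ∫ x, ((1 - x) * f s + x * f (s + 1)) ∂ν := by
        rw [integral_add (hsub.mul_const _) (hid.mul_const _), integral_mul_const,
          integral_mul_const, integral_sub (integrable_const 1) hid]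
        simp
    _ ≤ _root_.shiftAvg ν f s := by
        refine integral_mono_ae hchord (hf.integrable_comp_add hid s) ?_
        filter_upwards [hν] with x hx
        have := hfc.2 (Set.mem_univ s) (Set.mem_univ (s + 1)) (sub_nonneg.2 hx.2) hx.1
          (sub_add_cancel 1 x)
        simp only [smul_eq_mul] at this
        convert this using 2
        ring

theorem iterate_shiftAvg_le_iterate_shiftAvg {β ν : Measure ℝ} [IsProbabilityMeasure β]
    [IsProbabilityMeasure ν] {p : ℝ} (hp0 : 0 ≤ p) (hp1 : p ≤ 1) (hβint : Integrable id β)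
    (hβ : ∀ g, Continuous g → ∀ s, shiftAvg β g s = (1 - p) * g s + p * g (s + 1))
    (hν : ∀ᵐ x ∂ν, x ∈ Set.Icc (0 : ℝ) 1) (hνmean : ∫ x, x ∂ν = p)
    {K : NNReal} {f : ℝ → ℝ} (hf : LipschitzWith K f) (hfc : ConcaveOn ℝ Set.univ f) (n : ℕ) :
    (shiftAvg β)^[n] f ≤ (shiftAvg ν)^[n] f := by
  have hνint : Integrable id ν := Integrable.of_mem_Icc 0 1 aemeasurable_id hν
  induction n with
  | zero => exact le_rfl
  | succ n ih =>
    intro s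
    rw [Function.iterate_succ_apply', Function.iterate_succ_apply',
      hβ _ (hf.iterate_shiftAvg hβint n).continuous]
    calc (1 - p) * (shiftAvg β)^[n] f s + p * (shiftAvg β)^[n] f (s + 1)
        ≤ (1 - p) * (shiftAvg ν)^[n] f s + p * (shiftAvg ν)^[n] f (s + 1) := by
          gcongr
          exacts [ih s, ih (s + 1)]
      _ ≤ shiftAvg ν ((shiftAvg ν)^[n] f) s := by
          simpa [hνmean] using (hfc.iterate_shiftAvg hνint hf n).chord_le_shiftAvg hν
            (hf.iterate_shiftAvg hνint n) s

section sum

variable {Ω : Type*} [MeasurableSpace Ω] {μ : Measure Ω} [IsProbabilityMeasure μ]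
  {ρ : Measure ℝ} [IsProbabilityMeasure ρ] {K : NNReal} {f : ℝ → ℝ}

theorem integral_comp_add_eq_integral_shiftAvg {S V : Ω → ℝ} (hS : Measurable S)
    (hV : Measurable V) (hSV : IndepFun S V μ) (hSint : Integrable S μ) (hVρ : μ.map V = ρ)
    (hρ : Integrable id ρ) (hf : LipschitzWith K f) :
    ∫ ω, f (S ω + V ω) ∂μ = ∫ ω, shiftAvg ρ f (S ω) ∂μ := by
  have hVint : Integrable V μ := (hVρ ▸ hρ).comp_measurable hV
  have hlaw : μ.map (S + V) = μ.map S ∗ ρ := by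
    rw [hSV.map_add_eq_map_conv_map hS hV, hVρ]
  have hfint : Integrable f (μ.map S ∗ ρ) := by
    rw [← hlaw, integrable_map_measure hf.continuous.aestronglyMeasurable
      (hS.add hV).aemeasurable]
    exact hf.integrable_comp (hSint.add hVint)
  calc ∫ ω, f (S ω + V ω) ∂μ = ∫ z, f z ∂(μ.map S ∗ ρ) := by
        rw [← hlaw, integral_map (hS.add hV).aemeasurable hf.continuous.aestronglyMeasurable]
        rfl
    _ = ∫ s, shiftAvg ρ f s ∂(μ.map S) := integral_conv hfint
    _ = ∫ ω, shiftAvg ρ f (S ω) ∂μ :=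
        integral_map hS.aemeasurable (hf.shiftAvg hρ).continuous.aestronglyMeasurable

theorem integral_comp_sum_eq_iterate_shiftAvg {ι : Type*} {W : ι → Ω → ℝ}
    (hW : ∀ i, Measurable (W i)) (hind : iIndepFun W μ) (hlaw : ∀ i, μ.map (W i) = ρ)
    (hρ : Integrable id ρ) (s : Finset ι) (hf : LipschitzWith K f) :
    ∫ ω, f (∑ i ∈ s, W i ω) ∂μ = (shiftAvg ρ)^[s.card] f 0 := by
  classical
  have hWint (i : ι) : Integrable (W i) μ := (hlaw i ▸ hρ).comp_measurable (hW i)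
  induction s using Finset.induction_on generalizing f with
  | empty => simp
  | insert a s ha ih =>
    have hS : Measurable (∑ i ∈ s, W i) := by fun_prop
    calc ∫ ω, f (∑ i ∈ insert a s, W i ω) ∂μ = ∫ ω, f ((∑ i ∈ s, W i) ω + W a ω) ∂μ := by
          simp [Finset.sum_insert ha, add_comm, Finset.sum_apply]
      _ = ∫ ω, shiftAvg ρ f ((∑ i ∈ s, W i) ω) ∂μ :=
          integral_comp_add_eq_integral_shiftAvg hS (hW a)
            (hind.indepFun_finsetSum_of_notMem hW ha) (integrable_finsetSum' s fun i _ => hWint i)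
            (hlaw a) hρ hf
      _ = (shiftAvg ρ)^[(insert a s).card] f 0 := by
          rw [Finset.card_insert_of_notMem ha, Function.iterate_succ_apply]
          simpa [Finset.sum_apply] using ih (hf.shiftAvg hρ)

end sum

section bernoulli

variable {Ω : Type*} [MeasurableSpace Ω] {μ : Measure Ω} [IsProbabilityMeasure μ] {p : ℝ}
  {Z : Ω → ℝ}

theorem integral_comp_of_bernoulli (hp0 : 0 ≤ p) (hZ : Measurable Z)
    (hZval : ∀ ω, Z ω = 0 ∨ Z ω = 1) (hZdist : μ {ω | Z ω = 1} = ENNReal.ofReal p)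
    (g : ℝ → ℝ) : ∫ ω, g (Z ω) ∂μ = (1 - p) * g 0 + p * g 1 := by
  set A := {ω | Z ω = 1}
  have hA : MeasurableSet A := hZ (measurableSet_singleton 1)
  have hgZ : (fun ω => g (Z ω)) = fun ω => g 0 + A.indicator (fun _ => g 1 - g 0) ω := by
    funext ω
    rcases hZval ω with h | h <;> simp [A, Set.indicator, h]
  rw [hgZ, integral_add (integrable_const _) ((integrable_const _).indicator hA),
    integral_const, integral_indicator_const _ hA, measureReal_def μ A, hZdist,
    ENNReal.toReal_ofReal hp0, probReal_univ, smul_eq_mul, smul_eq_mul]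
  ring

theorem map_eq_map_of_bernoulli (hp0 : 0 ≤ p) {Z' : Ω → ℝ} (hZ : Measurable Z)
    (hZval : ∀ ω, Z ω = 0 ∨ Z ω = 1) (hZdist : μ {ω | Z ω = 1} = ENNReal.ofReal p)
    (hZ' : Measurable Z') (hZ'val : ∀ ω, Z' ω = 0 ∨ Z' ω = 1)
    (hZ'dist : μ {ω | Z' ω = 1} = ENNReal.ofReal p) : μ.map Z = μ.map Z' := by
  ext s hs
  rw [← ENNReal.toReal_eq_toReal_iff' (measure_ne_top _ _) (measure_ne_top _ _),
    ← measureReal_def, ← measureReal_def, ← integral_indicator_one hs,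
    ← integral_indicator_one hs, integral_map hZ.aemeasurable, integral_map hZ'.aemeasurable,
    integral_comp_of_bernoulli hp0 hZ hZval hZdist,
    integral_comp_of_bernoulli hp0 hZ' hZ'val hZ'dist]
  all_goals exact (stronglyMeasurable_one.indicator hs).aestronglyMeasurable

end bernoulli

theorem stmt_1_general {Ω : Type*} [MeasurableSpace Ω] (μ : Measure Ω) [IsProbabilityMeasure μ]
    (c : ℝ) (T : ℕ) (hT : 0 < T) (p : ℝ) (hp0 : 0 ≤ p) (hp1 : p ≤ 1)
    (X Y : Fin T → Ω → ℝ)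
    (hXmeas : ∀ t, Measurable (X t))
    (hXindep : iIndepFun X μ)
    (hXident : ∀ s t : Fin T, μ.map (X s) = μ.map (X t))
    (hXrange : ∀ t ω, X t ω ∈ Set.Icc (0 : ℝ) 1)
    (hXmean : ∀ t, ∫ ω, X t ω ∂μ = p)
    (hYmeas : ∀ t, Measurable (Y t))
    (hYindep : iIndepFun Y μ)
    (hYval : ∀ t ω, Y t ω = 0 ∨ Y t ω = 1)
    (hYdist : ∀ t, μ {ω | Y t ω = 1} = ENNReal.ofReal p) :
    ∫ ω, min c (∑ t, Y t ω) ∂μ ≤ ∫ ω, min c (∑ t, X t ω) ∂μ := by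
  let t₀ : Fin T := ⟨0, hT⟩
  have := Measure.isProbabilityMeasure_map (μ := μ) (hXmeas t₀).aemeasurable
  have := Measure.isProbabilityMeasure_map (μ := μ) (hYmeas t₀).aemeasurable
  have hν : ∀ᵐ x ∂μ.map (X t₀), x ∈ Set.Icc (0 : ℝ) 1 :=
    (ae_map_iff (hXmeas t₀).aemeasurable measurableSet_Icc).2 (.of_forall (hXrange t₀))
  have hνmean : ∫ x, x ∂μ.map (X t₀) = p :=
    (integral_map (f := id) (hXmeas t₀).aemeasurable aestronglyMeasurable_id).trans (hXmean t₀)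
  have hβ (g : ℝ → ℝ) (hg : Continuous g) (s : ℝ) :
      shiftAvg (μ.map (Y t₀)) g s = (1 - p) * g s + p * g (s + 1) := by
    rw [shiftAvg, integral_map (hYmeas t₀).aemeasurable (by fun_prop),
      integral_comp_of_bernoulli hp0 (hYmeas t₀) (hYval t₀) (hYdist t₀) (fun y => g (s + y)),
      add_zero]
  have hβint : Integrable id (μ.map (Y t₀)) := by
    refine Integrable.of_mem_Icc 0 1 aemeasurable_id
      ((ae_map_iff (hYmeas t₀).aemeasurable measurableSet_Icc).2 (.of_forall fun ω => ?_))
    rcases hYval t₀ ω with h | h <;> simp [h]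
  have hYlaw (t : Fin T) : μ.map (Y t) = μ.map (Y t₀) :=
    map_eq_map_of_bernoulli hp0 (hYmeas t) (hYval t) (hYdist t) (hYmeas t₀) (hYval t₀) (hYdist t₀)
  have hmin : LipschitzWith 1 (min c) := LipschitzWith.id.const_min c
  have hminc : ConcaveOn ℝ Set.univ (min c) :=
    (concaveOn_const c convex_univ).inf (concaveOn_id convex_univ)
  rw [integral_comp_sum_eq_iterate_shiftAvg hYmeas hYindep hYlaw hβint _ hmin,
    integral_comp_sum_eq_iterate_shiftAvg hXmeas hXindep (fun t => hXident t t₀)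
      (Integrable.of_mem_Icc 0 1 aemeasurable_id hν) _ hmin]
  exact iterate_shiftAvg_le_iterate_shiftAvg hp0 hp1 hβint hβ hν hνmean hmin hminc _ 0

/-- Let `c > 0`, `T` a positive integer, `p ∈ [0,1]`. Let `X_1, …, X_T` be i.i.d.
random variables taking values in `[0,1]` with `E[X_t] = p`, and let `Y_1, …, Y_T` be i.i.d.
Bernoulli random variables with success probability `p`. Then
`E[min(c, Σ X_t)] ≥ E[min(c, Σ Y_t)]`. -/
theorem stmt_1 {Ω : Type*} [MeasurableSpace Ω] (μ : Measure Ω) [IsProbabilityMeasure μ]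
    (c : ℝ) (hc : 0 < c) (T : ℕ) (hT : 0 < T) (p : ℝ) (hp0 : 0 ≤ p) (hp1 : p ≤ 1)
    (X Y : Fin T → Ω → ℝ)
    (hXmeas : ∀ t, Measurable (X t))
    (hXindep : iIndepFun X μ)
    (hXident : ∀ s t : Fin T, μ.map (X s) = μ.map (X t))
    (hXrange : ∀ t ω, X t ω ∈ Set.Icc (0 : ℝ) 1)
    (hXmean : ∀ t, ∫ ω, X t ω ∂μ = p)
    (hYmeas : ∀ t, Measurable (Y t))
    (hYindep : iIndepFun Y μ)
    (hYval : ∀ t ω, Y t ω = 0 ∨ Y t ω = 1)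
    (hYdist : ∀ t, μ {ω | Y t ω = 1} = ENNReal.ofReal p) :
    ∫ ω, min c (∑ t, Y t ω) ∂μ ≤ ∫ ω, min c (∑ t, X t ω) ∂μ :=
  stmt_1_general μ c T hT p hp0 hp1 X Y hXmeas hXindep hXident hXrange hXmean hYmeas hYindep hYval
    hYdist
end

section
/- Let c > 0 be a real number and T a positive integer. The function f : (0,1] → ℝ defined by f(x) = E[min(c, Bin(T, x))] / (T x) is non-increasing: for all real x, y with 0 < x ≤ y ≤ 1, f(x) ≥ f(y). -/
/-- `E[min(c, Bin(T, ρ))]`: the expectation of a Binomial(T, ρ) random variable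
truncated at `c`. -/
noncomputable def truncBinExp (T : ℕ) (ρ c : ℝ) : ℝ :=
  ∑ l ∈ Finset.range (T + 1), (T.choose l : ℝ) * ρ ^ l * (1 - ρ) ^ (T - l) * min c (l : ℝ)

/-!
Binomial thinning: keeping each success of a `Bin(T, y)` variable independently with probability
`q = x / y` yields a `Bin(T, x)` variable. Given `m` successes, the thinned count `K ~ Bin(m, q)`
satisfies `E[min(c, K)] ≥ q · min(c, m)`, because `min(c, ·)` is concave and vanishes at `0`, so
`min(c, k) ≥ (k / m) · min(c, m)` for `k ≤ m`. Averaging over `m` gives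
`E[min(c, Bin(T, x))] ≥ (x / y) · E[min(c, Bin(T, y))]`, which is the claim after dividing by `T x`.
-/

open Finset

noncomputable def binomialExpectation (n : ℕ) (p : ℝ) (F : ℕ → ℝ) : ℝ :=
  ∑ k ∈ range (n + 1), (n.choose k : ℝ) * p ^ k * (1 - p) ^ (n - k) * F k

lemma binomialExpectation_const_mul (n : ℕ) (p a : ℝ) (F : ℕ → ℝ) :
    binomialExpectation n p (fun k ↦ a * F k) = a * binomialExpectation n p F := by
  simp only [binomialExpectation, mul_sum]
  exact sum_congr rfl fun _ _ ↦ by ring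

lemma binomialExpectation_mono {n : ℕ} {p : ℝ} (hp₀ : 0 ≤ p) (hp₁ : p ≤ 1) {F G : ℕ → ℝ}
    (hFG : ∀ k ≤ n, F k ≤ G k) : binomialExpectation n p F ≤ binomialExpectation n p G := by
  have : 0 ≤ 1 - p := sub_nonneg.2 hp₁
  refine sum_le_sum fun k hk ↦ mul_le_mul_of_nonneg_left (hFG k ?_) (by positivity)
  exact Nat.lt_succ_iff.1 (mem_range.1 hk)

lemma binomialExpectation_natCast (n : ℕ) (p : ℝ) :
    binomialExpectation n p (fun k ↦ k) = n * p := by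
  have := congrArg (Polynomial.eval p) (bernsteinPolynomial.sum_smul ℝ n)
  simp only [Polynomial.eval_finsetSum, bernsteinPolynomial,
    Polynomial.eval_mul, Polynomial.eval_pow, Polynomial.eval_sub, Polynomial.eval_one,
    Polynomial.eval_X, Polynomial.eval_natCast, nsmul_eq_mul] at this
  rw [← this, binomialExpectation]
  exact sum_congr rfl fun _ _ ↦ by ring

lemma binomialExpectation_binomialExpectation (n : ℕ) (y q : ℝ) (F : ℕ → ℝ) :
    binomialExpectation n y (fun m ↦ binomialExpectation m q F) =
      binomialExpectation n (y * q) F := by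
  simp only [binomialExpectation, mul_sum, range_eq_Ico]
  rw [← sum_Ico_Ico_comm]
  refine sum_congr rfl fun k hk ↦ ?_
  have hkn : k ≤ n := Nat.lt_succ_iff.1 (mem_Ico.1 hk).2
  rw [sum_Ico_eq_sum_range, Nat.sub_add_comm hkn]
  have hterm : ∀ j ∈ range (n - k + 1),
      (n.choose (k + j) : ℝ) * y ^ (k + j) * (1 - y) ^ (n - (k + j)) *
          ((k + j).choose k * q ^ k * (1 - q) ^ (k + j - k) * F k) =
        n.choose k * (y * q) ^ k * F k *
          ((y * (1 - q)) ^ j * (1 - y) ^ (n - k - j) * (n - k).choose j) := by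
    intro j _
    have hchoose : (n.choose (k + j) : ℝ) * (k + j).choose k = n.choose k * (n - k).choose j := by
      have := Nat.choose_mul (n := n) (Nat.le_add_right k j)
      rw [Nat.add_sub_cancel_left] at this
      exact_mod_cast this
    rw [Nat.add_sub_cancel_left, Nat.sub_add_eq, mul_pow y (1 - q)]
    linear_combination (y ^ (k + j) * (1 - y) ^ (n - k - j) * q ^ k * (1 - q) ^ j * F k) * hchoose
  rw [sum_congr rfl hterm, ← mul_sum, ← add_pow, show y * (1 - q) + (1 - y) = 1 - y * q by ring]
  ring

lemma mul_min_le_mul_min {c a b : ℝ} (hc : 0 ≤ c) (ha : 0 ≤ a) (hab : a ≤ b) :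
    a * min c b ≤ b * min c a := by
  rcases le_total c a with h | h
  · rw [min_eq_left h]
    nlinarith [min_le_left c b]
  · rw [min_eq_right h, mul_comm]
    exact mul_le_mul_of_nonneg_right (min_le_right c b) ha

lemma mul_min_le_binomialExpectation_min {c q : ℝ} (hc : 0 ≤ c) (hq₀ : 0 ≤ q) (hq₁ : q ≤ 1)
    (m : ℕ) : q * min c (m : ℝ) ≤ binomialExpectation m q (fun k ↦ min c (k : ℝ)) := by
  rcases Nat.eq_zero_or_pos m with rfl | hm
  · simp [binomialExpectation, min_eq_right hc]
  have hm : (0 : ℝ) < m := Nat.cast_pos.2 hm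
  refine le_of_mul_le_mul_left ?_ hm
  calc (m : ℝ) * (q * min c m) = binomialExpectation m q (fun k ↦ min c m * k) := by
        rw [binomialExpectation_const_mul, binomialExpectation_natCast]; ring
    _ ≤ binomialExpectation m q (fun k ↦ m * min c k) :=
        binomialExpectation_mono hq₀ hq₁ fun k hk ↦ by
          rw [mul_comm]; exact mul_min_le_mul_min hc k.cast_nonneg (Nat.cast_le.2 hk)
    _ = m * binomialExpectation m q (fun k ↦ min c k) := binomialExpectation_const_mul ..

lemma mul_truncBinExp_le_truncBinExp_mul {c y q : ℝ} (hc : 0 ≤ c) (hy₀ : 0 ≤ y) (hy₁ : y ≤ 1)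
    (hq₀ : 0 ≤ q) (hq₁ : q ≤ 1) (T : ℕ) :
    q * truncBinExp T y c ≤ truncBinExp T (y * q) c := by
  change q * binomialExpectation T y _ ≤ binomialExpectation T (y * q) _
  rw [← binomialExpectation_binomialExpectation, ← binomialExpectation_const_mul]
  exact binomialExpectation_mono hy₀ hy₁ fun m _ ↦ mul_min_le_binomialExpectation_min hc hq₀ hq₁ m

theorem stmt_5_general (c : ℝ) (hc : 0 < c) (T : ℕ)
    (x y : ℝ) (hx : 0 < x) (hxy : x ≤ y) (hy : y ≤ 1) :
    truncBinExp T y c / (T * y) ≤ truncBinExp T x c / (T * x) := by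
  have hy₀ : 0 < y := hx.trans_le hxy
  have key := mul_truncBinExp_le_truncBinExp_mul hc.le hy₀.le hy (div_nonneg hx.le hy₀.le)
    (div_le_one_of_le₀ hxy hy₀.le) T
  rw [mul_div_cancel₀ x hy₀.ne'] at key
  calc truncBinExp T y c / (T * y) = x / y * truncBinExp T y c / (T * x) := by
        field_simp
    _ ≤ truncBinExp T x c / (T * x) := by gcongr

/-- For `c > 0` and a positive integer `T`, the function
`f(x) = E[min(c, Bin(T, x))] / (T x)` is non-increasing on `(0, 1]`. -/
theorem stmt_5 (c : ℝ) (hc : 0 < c) (T : ℕ) (hT : 0 < T)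
    (x y : ℝ) (hx : 0 < x) (hxy : x ≤ y) (hy : y ≤ 1) :
    truncBinExp T y c / (T * y) ≤ truncBinExp T x c / (T * x) :=
  stmt_5_general c hc T x y hx hxy hy
end

section
/- Let T be a positive integer and let x, y be real numbers with T ≥ x ≥ y > 0. Then E[min(x, Bin(T, x/T))] / x ≥ E[min(y, Bin(T, y/T))] / y. -/
open Finset Polynomial

namespace bernsteinPolynomial

variable {R : Type*} [CommRing R]

theorem eval_eq (n ν : ℕ) (x : R) :
    (bernsteinPolynomial R n ν).eval x = n.choose ν * x ^ ν * (1 - x) ^ (n - ν) := by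
  simp [bernsteinPolynomial]

theorem sum_range_eval_mul_of_le {n N : ℕ} (h : n ≤ N) (x : R) (f : ℕ → R) :
    ∑ ν ∈ range (N + 1), (bernsteinPolynomial R n ν).eval x * f ν =
      ∑ ν ∈ range (n + 1), (bernsteinPolynomial R n ν).eval x * f ν := by
  refine (sum_subset (range_subset_range.2 (by omega)) fun ν _ hν => ?_).symm
  rw [eq_zero_of_lt R (by simpa using hν), eval_zero, zero_mul]

theorem sum_eval (n : ℕ) (x : R) :
    ∑ ν ∈ range (n + 1), (bernsteinPolynomial R n ν).eval x = 1 := by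
  simpa [eval_finsetSum] using congrArg (eval x) (bernsteinPolynomial.sum R n)

theorem sum_mul_eval (n : ℕ) (x : R) :
    ∑ ν ∈ range (n + 1), (ν : R) * (bernsteinPolynomial R n ν).eval x = n * x := by
  simpa [eval_finsetSum] using congrArg (eval x) (bernsteinPolynomial.sum_smul R n)

theorem eval_nonneg (n ν : ℕ) {x : ℝ} (h₀ : 0 ≤ x) (h₁ : x ≤ 1) :
    0 ≤ (bernsteinPolynomial ℝ n ν).eval x := by
  rw [eval_eq]
  have : 0 ≤ 1 - x := by linarith
  positivity

/-- Thinning: a Binomial(n, a) number of trials, each kept with probability `b`,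
is Binomial(n, ab). -/
theorem sum_eval_mul_eval (n ν : ℕ) (a b : R) :
    ∑ k ∈ range (n + 1), (bernsteinPolynomial R n k).eval a * (bernsteinPolynomial R k ν).eval b =
      (bernsteinPolynomial R n ν).eval (a * b) := by
  rcases lt_or_ge n ν with hν | hν
  · rw [eq_zero_of_lt R hν, eval_zero]
    exact sum_eq_zero fun k hk => by
      rw [eq_zero_of_lt R (n := k) (by simp at hk; omega), eval_zero, mul_zero]
  obtain ⟨m, rfl⟩ := Nat.exists_eq_add_of_le hν
  rw [show ν + m + 1 = ν + (m + 1) by omega, sum_range_add, sum_eq_zero, zero_add]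
  · have hterm : ∀ j ∈ range (m + 1),
        (bernsteinPolynomial R (ν + m) (ν + j)).eval a * (bernsteinPolynomial R (ν + j) ν).eval b =
          (ν + m).choose ν * (a * b) ^ ν * ((a * (1 - b)) ^ j * (1 - a) ^ (m - j) * m.choose j) := by
      intro j hjm
      have hj : j ≤ m := by simpa [Nat.lt_succ_iff] using hjm
      have hchoose : ((ν + m).choose (ν + j) : R) * ((ν + j).choose ν) =
          (ν + m).choose ν * m.choose j := by
        have h := Nat.choose_mul (n := ν + m) (Nat.le_add_right ν j)
        simp only [Nat.add_sub_cancel_left] at h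
        simpa only [Nat.cast_mul] using congrArg (Nat.cast : ℕ → R) h
      simp only [eval_eq, show ν + m - (ν + j) = m - j by omega, Nat.add_sub_cancel_left]
      rw [mul_pow a (1 - b), mul_pow a b, pow_add]
      linear_combination (a ^ (ν + j) * (1 - a) ^ (m - j) * b ^ ν * (1 - b) ^ j) * hchoose
    rw [sum_congr rfl hterm, ← mul_sum, ← add_pow, eval_eq, Nat.add_sub_cancel_left]
    ring
  · intro k hk
    rw [eq_zero_of_lt R (n := k) (by simpa using hk), eval_zero, mul_zero]

end bernsteinPolynomial

theorem Finset.sum_mul_min_le_min_sum {ι : Type*} (s : Finset ι) (w f : ι → ℝ) (c : ℝ)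
    (hw : ∀ i ∈ s, 0 ≤ w i) (hw₁ : ∑ i ∈ s, w i = 1) :
    ∑ i ∈ s, w i * min c (f i) ≤ min c (∑ i ∈ s, w i * f i) := by
  refine le_min ?_ (sum_le_sum fun i hi => mul_le_mul_of_nonneg_left (min_le_right _ _) (hw i hi))
  calc ∑ i ∈ s, w i * min c (f i) ≤ ∑ i ∈ s, w i * c :=
        sum_le_sum fun i hi => mul_le_mul_of_nonneg_left (min_le_left _ _) (hw i hi)
    _ = c := by rw [← sum_mul, hw₁, one_mul]

theorem truncBinExp_eq (T : ℕ) (ρ c : ℝ) :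
    truncBinExp T ρ c = ∑ l ∈ range (T + 1), (bernsteinPolynomial ℝ T l).eval ρ * min c l := by
  simp only [truncBinExp, bernsteinPolynomial.eval_eq]

theorem truncBinExp_le_min (n : ℕ) {ρ : ℝ} (h₀ : 0 ≤ ρ) (h₁ : ρ ≤ 1) (c : ℝ) :
    truncBinExp n ρ c ≤ min c (n * ρ) := by
  rw [truncBinExp_eq, ← bernsteinPolynomial.sum_mul_eval]
  simp_rw [mul_comm (Nat.cast _ : ℝ)]
  exact sum_mul_min_le_min_sum _ _ _ _ (fun l _ => bernsteinPolynomial.eval_nonneg n l h₀ h₁)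
    (bernsteinPolynomial.sum_eval n ρ)

theorem truncBinExp_mul_le (T : ℕ) {a b : ℝ} (ha₀ : 0 ≤ a) (ha₁ : a ≤ 1) (hb₀ : 0 ≤ b)
    (hb₁ : b ≤ 1) (c : ℝ) :
    truncBinExp T (a * b) (b * c) ≤ b * truncBinExp T a c := by
  have hthin : truncBinExp T (a * b) (b * c) =
      ∑ k ∈ range (T + 1), (bernsteinPolynomial ℝ T k).eval a * truncBinExp k b (b * c) := by
    simp_rw [truncBinExp_eq, ← bernsteinPolynomial.sum_eval_mul_eval, sum_mul, mul_sum]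
    rw [sum_comm]
    refine sum_congr rfl fun k hk => ?_
    simp only [mul_assoc, ← mul_sum]
    rw [bernsteinPolynomial.sum_range_eval_mul_of_le (by simpa [Nat.lt_succ_iff] using hk)]
  rw [hthin, truncBinExp_eq, mul_sum]
  refine sum_le_sum fun k _ => ?_
  calc (bernsteinPolynomial ℝ T k).eval a * truncBinExp k b (b * c)
      ≤ (bernsteinPolynomial ℝ T k).eval a * min (b * c) (k * b) :=
        mul_le_mul_of_nonneg_left (truncBinExp_le_min k hb₀ hb₁ _)
          (bernsteinPolynomial.eval_nonneg T k ha₀ ha₁)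
    _ = b * ((bernsteinPolynomial ℝ T k).eval a * min c k) := by
        rw [mul_comm (k : ℝ), ← mul_min_of_nonneg _ _ hb₀]; ring

theorem stmt_6_general (T : ℕ) (x y : ℝ) (hy : 0 < y) (hyx : y ≤ x) (hxT : x ≤ T) :
    truncBinExp T (y / T) y / y ≤ truncBinExp T (x / T) x / x := by
  have hx : 0 < x := hy.trans_le hyx
  have hthin := truncBinExp_mul_le T (div_nonneg hx.le T.cast_nonneg)
    (div_le_one_of_le₀ hxT T.cast_nonneg) (div_nonneg hy.le hx.le) ((div_le_one hx).2 hyx) x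
  rw [show x / T * (y / x) = y / T by field_simp, div_mul_cancel₀ y hx.ne'] at hthin
  rw [div_le_div_iff₀ hy hx]
  calc truncBinExp T (y / T) y * x ≤ y / x * truncBinExp T (x / T) x * x := by gcongr
    _ = truncBinExp T (x / T) x * y := by field_simp

/-- For a positive integer `T` and reals `T ≥ x ≥ y > 0`,
`E[min(x, Bin(T, x/T))]/x ≥ E[min(y, Bin(T, y/T))]/y`. -/
theorem stmt_6 (T : ℕ) (hT : 0 < T) (x y : ℝ) (hy : 0 < y) (hyx : y ≤ x) (hxT : x ≤ T) :
    truncBinExp T (y / T) y / y ≤ truncBinExp T (x / T) x / x :=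
  stmt_6_general T x y hy hyx hxT
end

section
/- Let b and T be positive integers with b ≤ T. Then E[min(b, Bin(T, b/T))] ≥ b · (1 + (b/T)^T − (T choose b)·(b/T)^b·(1 − b/T)^{T−b}). -/
open Finset

namespace Nat

theorem pow_le_choose_mul_pow {n k : ℕ} (h : k ≤ n) : n ^ k ≤ n.choose k * k ^ k := by
  refine Nat.le_of_mul_le_mul_right ?_ k.factorial_pos
  calc n ^ k * k ! = ∏ i ∈ range k, n * (k - i) := by
        rw [prod_mul_distrib, prod_const, card_range, ← descFactorial_eq_prod_range,
          descFactorial_self]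
    _ ≤ ∏ i ∈ range k, (n - i) * k := by
        refine prod_le_prod' fun i _ => ?_
        rw [Nat.mul_sub, Nat.sub_mul]
        exact Nat.sub_le_sub_left (by rw [Nat.mul_comm]; exact Nat.mul_le_mul_right i h) _
    _ = n.choose k * k ^ k * k ! := by
        rw [prod_mul_distrib, prod_const, card_range, ← descFactorial_eq_prod_range,
          descFactorial_eq_factorial_mul_choose]
        ring

end Nat

theorem one_le_choose_mul_div_pow {n k : ℕ} (h : k ≤ n) :
    1 ≤ (n.choose k : ℝ) * ((k : ℝ) / n) ^ k := by
  rcases n.eq_zero_or_pos with rfl | hn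
  · simp [Nat.le_zero.1 h]
  rw [div_pow, mul_div_assoc', one_le_div (by positivity)]
  exact_mod_cast Nat.pow_le_choose_mul_pow h

noncomputable def binomWeight (T : ℕ) (ρ : ℝ) (l : ℕ) : ℝ :=
  (T.choose l : ℝ) * ρ ^ l * (1 - ρ) ^ (T - l)

theorem sum_binomWeight (T : ℕ) (ρ : ℝ) : ∑ l ∈ range (T + 1), binomWeight T ρ l = 1 := by
  calc ∑ l ∈ range (T + 1), binomWeight T ρ l = (ρ + (1 - ρ)) ^ T := by
        rw [add_pow]
        exact sum_congr rfl fun l _ => by rw [binomWeight]; ring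
    _ = 1 := by simp

theorem succ_mul_binomWeight_succ {T l : ℕ} (ρ : ℝ) (hl : l < T) :
    (l + 1) * (1 - ρ) * binomWeight T ρ (l + 1) = (T - l) * ρ * binomWeight T ρ l := by
  have hchoose : (T.choose (l + 1) : ℝ) * (l + 1) = T.choose l * (T - l) := by
    have h := congrArg (Nat.cast (R := ℝ)) (Nat.choose_succ_right_eq T l)
    push_cast [Nat.cast_sub hl.le] at h
    exact h
  have hpow : (1 - ρ) ^ (T - l) = (1 - ρ) * (1 - ρ) ^ (T - (l + 1)) := by
    rw [← pow_succ', Nat.sub_add_eq, Nat.sub_add_cancel (Nat.sub_pos_of_lt hl)]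
  rw [binomWeight, binomWeight, hpow]
  linear_combination ρ ^ (l + 1) * (1 - ρ) ^ (T - (l + 1)) * (1 - ρ) * hchoose

theorem sum_range_mean_sub_mul_binomWeight {T n : ℕ} (ρ : ℝ) (hn : n ≤ T) :
    ∑ l ∈ range n, (T * ρ - l) * binomWeight T ρ l = n * (1 - ρ) * binomWeight T ρ n := by
  have htel : ∀ l ∈ range n, (T * ρ - l) * binomWeight T ρ l =
      ((l + 1 : ℕ) : ℝ) * (1 - ρ) * binomWeight T ρ (l + 1) - l * (1 - ρ) * binomWeight T ρ l := by
    intro l hl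
    rw [Nat.cast_succ, succ_mul_binomWeight_succ ρ (by simp at hl; omega)]
    ring
  rw [sum_congr rfl htel, sum_range_sub (fun l => (l : ℝ) * (1 - ρ) * binomWeight T ρ l)]
  simp

theorem truncBinExp_eq_sub_sum {T c : ℕ} (ρ : ℝ) (hc : c ≤ T) :
    truncBinExp T ρ c = c - ∑ l ∈ range c, (c - l) * binomWeight T ρ l := by
  have hdeficit : ∑ l ∈ range c, (c - l) * binomWeight T ρ l =
      ∑ l ∈ range (T + 1), (c - min (c : ℝ) l) * binomWeight T ρ l := by
    refine sum_subset_zero_on_sdiff (range_subset_range.2 (by omega)) ?_ ?_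
    · intro l hl
      have hcl : (c : ℝ) ≤ l := by simp at hl; exact_mod_cast hl.2
      simp [min_eq_left hcl]
    · intro l hl
      have hlc : (l : ℝ) ≤ c := by simp at hl; exact_mod_cast hl.le
      rw [min_eq_right hlc]
  rw [hdeficit, truncBinExp]
  simp only [sub_mul, sum_sub_distrib, ← mul_sum, sum_binomWeight, mul_one, sub_sub_cancel]
  exact sum_congr rfl fun l _ => by rw [binomWeight]; ring

theorem truncBinExp_mean {T b : ℕ} (ρ : ℝ) (hbT : b ≤ T) (hmean : T * ρ = b) :
    truncBinExp T ρ b = b * (1 - (1 - ρ) * binomWeight T ρ b) := by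
  have htel := sum_range_mean_sub_mul_binomWeight ρ hbT
  rw [hmean] at htel
  rw [truncBinExp_eq_sub_sum ρ hbT, htel]
  ring

theorem pow_le_mul_binomWeight_mean {b T : ℕ} (hT : 0 < T) (hbT : b ≤ T) :
    ((b : ℝ) / T) ^ T ≤ (b / T) * binomWeight T (b / T) b := by
  rcases hbT.eq_or_lt with rfl | hlt
  · have hρ : (b : ℝ) / b = 1 := div_self (by positivity)
    simp [binomWeight, hρ]
  set ρ : ℝ := (b : ℝ) / T
  have hρ1 : ρ ≤ 1 := div_le_one_of_le₀ (by exact_mod_cast hbT) (by positivity)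
  have hcompl : 1 - ρ = ((T - b : ℕ) : ℝ) / T := by
    rw [Nat.cast_sub hbT, sub_div, div_self (by positivity)]
  calc ρ ^ T ≤ ρ ^ (b + 1) * 1 := by
        rw [mul_one]; exact pow_le_pow_of_le_one (by positivity) hρ1 (by omega)
    _ ≤ ρ ^ (b + 1) * ((T.choose (T - b) : ℝ) * (((T - b : ℕ) : ℝ) / T) ^ (T - b)) := by
        gcongr; exact one_le_choose_mul_div_pow (Nat.sub_le T b)
    _ = ρ * binomWeight T ρ b := by
        rw [binomWeight, hcompl, Nat.choose_symm hbT]; ring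

/-- For positive integers `b ≤ T`,
`E[min(b, Bin(T, b/T))] ≥ b·(1 + (b/T)^T − C(T,b)·(b/T)^b·(1 − b/T)^{T−b})`. -/
theorem stmt_7 (b T : ℕ) (hb : 0 < b) (hbT : b ≤ T) :
    (b : ℝ) * (1 + ((b : ℝ) / T) ^ T
        - (T.choose b : ℝ) * ((b : ℝ) / T) ^ b * (1 - (b : ℝ) / T) ^ (T - b))
      ≤ truncBinExp T ((b : ℝ) / T) b := by
  have hT : 0 < T := hb.trans_le hbT
  have hmean : (T : ℝ) * (b / T) = b := mul_div_cancel₀ _ (by positivity)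
  have hkey := pow_le_mul_binomWeight_mean hT hbT
  rw [truncBinExp_mean _ hbT hmean]
  refine mul_le_mul_of_nonneg_left ?_ (Nat.cast_nonneg b)
  rw [binomWeight] at hkey ⊢
  linarith
end

section
/- Fix a real b ≥ 0, a positive integer T, and an index t ∈ {1, …, T−1}. Let Q_1, …, Q_T be independent random variables taking values in [0,1], and let p_1, …, p_T ≥ 0 be per-period prices with p_t ≤ p_{t+1}. Let (p', Q') be obtained from (p, Q) by exchanging the entries at positions t and t+1 in both the price sequence and the demand sequence. Then E[Rev(p', Q'; b)] ≥ E[Rev(p, Q; b)]. -/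
/-!
The inequality holds pathwise. Swapping periods `t` and `t + 1` leaves every other period's
cumulative demand, hence its sales, unchanged. Writing `m x = min b x`, `S` for the demand
before period `t` and `a`, `c` for the two swapped demands, the revenue gains
`(p (t + 1) - p t) * (m (S + a) + m (S + c) - m S - m (S + a + c))`, and the second factor is
nonnegative because `m` is concave. Integrating is legitimate because revenue is bounded by
`∑ |p s|`.
-/

open MeasureTheory ProbabilityTheory

/-- Single-item revenue with inventory truncation: with initial inventory `b`, per-period prices
`P 0, …, P (T-1)` and demands `Q 0, …, Q (T-1)` (periods indexed from `0`), the revenue is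
`Σ_t P t · (min b S_{t+1} − min b S_t)` where `S_t = Q 0 + ⋯ + Q (t-1)`. -/
noncomputable def singleItemRev (b : ℝ) (T : ℕ) (P Q : ℕ → ℝ) : ℝ :=
  ∑ t ∈ Finset.range T,
    P t * (min b (∑ s ∈ Finset.range (t + 1), Q s) - min b (∑ s ∈ Finset.range t, Q s))

open Finset Equiv

theorem min_add_min_add_add_le {α : Type*} [AddCommGroup α] [LinearOrder α]
    [IsOrderedAddMonoid α] (b x : α) {a c : α} (ha : 0 ≤ a) (hc : 0 ≤ c) :
    min b x + min b (x + a + c) ≤ min b (x + a) + min b (x + c) := by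
  rcases le_total b x with h1 | h1 <;> rcases le_total b (x + a) with h2 | h2 <;>
    rcases le_total b (x + c) with h3 | h3 <;> rcases le_total b (x + a + c) with h4 | h4 <;>
    simp only [min_eq_left, min_eq_right, h1, h2, h3, h4] <;> grind

theorem swap_lt_of_lt {t T s : ℕ} (ht : t + 1 < T) (hs : s < T) : swap t (t + 1) s < T := by
  rw [swap_apply_def]; split_ifs <;> omega

theorem sum_range_comp_swap_of_ne {M : Type*} [AddCommMonoid M] (q : ℕ → M) {t n : ℕ}
    (hn : n ≠ t + 1) : ∑ r ∈ range n, q (swap t (t + 1) r) = ∑ r ∈ range n, q r := by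
  rcases le_or_gt n t with hnt | hnt
  · refine sum_congr rfl fun r hr => ?_
    rw [mem_range] at hr
    rw [swap_apply_of_ne_of_ne (by omega) (by omega)]
  · refine Perm.sum_comp _ _ q fun r hr => ?_
    rw [Set.mem_ofPred_eq, swap_apply_def] at hr
    rw [coe_range, Set.mem_Iio]
    split_ifs at hr <;> omega

theorem sum_range_succ_comp_swap {M : Type*} [AddCommMonoid M] (q : ℕ → M) (t : ℕ) :
    ∑ r ∈ range (t + 1), q (swap t (t + 1) r) = ∑ r ∈ range t, q r + q (t + 1) := by
  rw [sum_range_succ, sum_range_comp_swap_of_ne q (by omega), swap_apply_left]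

theorem singleItemRev_swap_sub (b : ℝ) {T t : ℕ} (ht : t + 1 < T) (p q : ℕ → ℝ) :
    singleItemRev b T (p ∘ swap t (t + 1)) (q ∘ swap t (t + 1)) - singleItemRev b T p q
      = (p (t + 1) - p t) *
        (min b (∑ r ∈ range t, q r + q t) + min b (∑ r ∈ range t, q r + q (t + 1))
          - min b (∑ r ∈ range t, q r) - min b (∑ r ∈ range t, q r + q t + q (t + 1))) := by
  unfold singleItemRev
  rw [← sum_sub_distrib, sum_eq_add_of_mem t (t + 1) (mem_range.2 (by omega)) (mem_range.2 ht)
    (by omega) fun s _ hs => ?_]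
  · have hS : ∑ r ∈ range t, q (swap t (t + 1) r) = ∑ r ∈ range t, q r :=
      sum_range_comp_swap_of_ne q (by omega)
    have hS' : ∑ r ∈ range (t + 1 + 1), q (swap t (t + 1) r) = ∑ r ∈ range (t + 1 + 1), q r :=
      sum_range_comp_swap_of_ne q (by omega)
    simp only [Function.comp_apply, swap_apply_left, swap_apply_right, hS',
      sum_range_succ_comp_swap]
    simp only [sum_range_succ, hS]
    ring
  · simp only [Function.comp_apply, swap_apply_of_ne_of_ne hs.1 hs.2,
      sum_range_comp_swap_of_ne q hs.2,
      sum_range_comp_swap_of_ne q (t := t) (n := s + 1) (by omega), sub_self]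

theorem singleItemRev_le_swap (b : ℝ) {T t : ℕ} (ht : t + 1 < T) {p q : ℕ → ℝ}
    (hp : p t ≤ p (t + 1)) (hqt : 0 ≤ q t) (hqt' : 0 ≤ q (t + 1)) :
    singleItemRev b T p q ≤ singleItemRev b T (p ∘ swap t (t + 1)) (q ∘ swap t (t + 1)) := by
  rw [← sub_nonneg, singleItemRev_swap_sub b ht]
  have := min_add_min_add_add_le b (∑ r ∈ range t, q r) hqt hqt'
  exact mul_nonneg (sub_nonneg.2 hp) (by linarith)

theorem abs_singleItemRev_le (b : ℝ) (T : ℕ) (p : ℕ → ℝ) {q : ℕ → ℝ}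
    (hq : ∀ s < T, |q s| ≤ 1) : |singleItemRev b T p q| ≤ ∑ s ∈ range T, |p s| := by
  refine (abs_sum_le_sum_abs _ _).trans (sum_le_sum fun s hs => ?_)
  have hsold : |min b (∑ r ∈ range (s + 1), q r) - min b (∑ r ∈ range s, q r)| ≤ 1 := by
    refine (abs_min_sub_min_le_max _ _ _ _).trans ?_
    rw [sub_self, abs_zero, sum_range_succ, add_sub_cancel_left]
    exact max_le zero_le_one (hq s (mem_range.1 hs))
  rw [abs_mul]
  exact mul_le_of_le_one_right (abs_nonneg _) hsold

theorem measurable_singleItemRev {Ω : Type*} [MeasurableSpace Ω] (b : ℝ) (T : ℕ) (p : ℕ → ℝ)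
    {R : ℕ → Ω → ℝ} (hR : ∀ s < T, Measurable (R s)) :
    Measurable fun ω => singleItemRev b T p fun s => R s ω := by
  have hS : ∀ n ≤ T, Measurable fun ω => ∑ r ∈ range n, R r ω := fun n hn =>
    Finset.measurable_sum _ fun r hr => hR r (by grind)
  refine Finset.measurable_sum _ fun s hs => measurable_const.mul ?_
  have hs := mem_range.1 hs
  exact (measurable_const.min (hS (s + 1) hs)).sub (measurable_const.min (hS s hs.le))

theorem integrable_singleItemRev {Ω : Type*} [MeasurableSpace Ω] (μ : Measure Ω)
    [IsFiniteMeasure μ] (b : ℝ) (T : ℕ) (p : ℕ → ℝ) {R : ℕ → Ω → ℝ}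
    (hR : ∀ s < T, Measurable (R s)) (hR1 : ∀ s < T, ∀ ω, |R s ω| ≤ 1) :
    Integrable (fun ω => singleItemRev b T p fun s => R s ω) μ :=
  .of_bound (measurable_singleItemRev b T p hR).aestronglyMeasurable _
    (ae_of_all _ fun ω => abs_singleItemRev_le b T p fun s hs => hR1 s hs ω)

theorem stmt_10_general {Ω : Type*} [MeasurableSpace Ω] (μ : Measure Ω) [IsProbabilityMeasure μ]
    (b : ℝ) (T : ℕ) (t : ℕ) (ht : t + 1 < T)
    (Q : ℕ → Ω → ℝ)
    (hQmeas : ∀ s, s < T → Measurable (Q s))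
    (hQrange : ∀ s, s < T → ∀ ω, Q s ω ∈ Set.Icc (0 : ℝ) 1)
    (p : ℕ → ℝ) (hpt : p t ≤ p (t + 1)) :
    ∫ ω, singleItemRev b T p (fun s => Q s ω) ∂μ
      ≤ ∫ ω, singleItemRev b T (fun s => p (Equiv.swap t (t + 1) s))
          (fun s => Q (Equiv.swap t (t + 1) s) ω) ∂μ := by
  have hQ1 : ∀ s < T, ∀ ω, |Q s ω| ≤ 1 := fun s hs ω =>
    abs_le.2 ⟨by linarith [(hQrange s hs ω).1], (hQrange s hs ω).2⟩
  refine integral_mono (integrable_singleItemRev μ b T p hQmeas hQ1)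
    (integrable_singleItemRev μ b T _ (fun s hs => hQmeas _ (swap_lt_of_lt ht hs))
      fun s hs => hQ1 _ (swap_lt_of_lt ht hs)) fun ω => ?_
  exact singleItemRev_le_swap b ht hpt (hQrange t (by omega) ω).1 (hQrange (t + 1) ht ω).1

/-- exchanging two consecutive price–demand pairs with `p_t ≤ p_{t+1}` (so that
the larger price comes first) does not decrease the expected revenue. Periods are indexed
`0, …, T-1`, and the exchanged positions are `t` and `t+1` with `t + 1 < T`. -/
theorem stmt_10 {Ω : Type*} [MeasurableSpace Ω] (μ : Measure Ω) [IsProbabilityMeasure μ]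
    (b : ℝ) (hb : 0 ≤ b) (T : ℕ) (hT : 0 < T) (t : ℕ) (ht : t + 1 < T)
    (Q : ℕ → Ω → ℝ)
    (hQmeas : ∀ s, s < T → Measurable (Q s))
    (hQindep : iIndepFun (fun s : Fin T => Q s) μ)
    (hQrange : ∀ s, s < T → ∀ ω, Q s ω ∈ Set.Icc (0 : ℝ) 1)
    (p : ℕ → ℝ) (hpnonneg : ∀ s, s < T → 0 ≤ p s) (hpt : p t ≤ p (t + 1)) :
    ∫ ω, singleItemRev b T p (fun s => Q s ω) ∂μ
      ≤ ∫ ω, singleItemRev b T (fun s => p (Equiv.swap t (t + 1) s))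
          (fun s => Q (Equiv.swap t (t + 1) s) ω) ∂μ :=
  stmt_10_general μ b T t ht Q hQmeas hQrange p hpt
end

section
/- Single-item non-stationary pricing with a bid-price calendar. Let T and m be positive integers, b ≥ 1 a real number, prices p_1, …, p_m > 0, and mean demands q_{t,j} ∈ [0,1] for t ∈ {1,…,T} and j ∈ {1,…,m}. Let x_{t,j} ≥ 0 be a DLP-N feasible solution and set r* = Σ_{t=1}^T Σ_{j=1}^m p_j q_{t,j} x_{t,j} and c = r*/(2b). Suppose that for each t an index j_t satisfies p_{j_t} ≥ c and (p_{j_t} − c)·q_{t,j_t} ≥ (p_j − c)·q_{t,j} for every j ∈ {1,…,m}. Let Q_1, …, Q_T be independent random variables taking values in [0,1] with E[Q_t] = q_{t,j_t}. Then the static calendar offering price p_{j_t} in period t satisfies E[Rev] = E[Σ_{t=1}^T p_{j_t}·(min(b, S_t) − min(b, S_{t−1}))] ≥ r*/2. -/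
/-!
Let `W_t = min b S_t` be the sales before period `t` and `u = E[W_T] / b ∈ [0, 1]`. As `Q_t` is
independent of `S_t` and `0 ≤ Q_t ≤ b`, the expected sales of period `t` are at least
`q_t (1 - E[W_t] / b) ≥ q_t (1 - u)`. Split each price as `(p_{j_t} - c) + c`: the bid-price part
telescopes to `c E[W_T] = u r* / 2`, and the margin part is at least
`(1 - u) Σ_t (p_{j_t} - c) q_{t,j_t} ≥ (1 - u) (r* - c b) = (1 - u) r* / 2`, because `j_t` maximizes
the margin and `x` is DLP-feasible.
-/

open MeasureTheory ProbabilityTheory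

open Finset

noncomputable def truncSales (b : ℝ) (Q : ℕ → ℝ) (t : ℕ) : ℝ :=
  min b (∑ s ∈ range t, Q s)

lemma mul_one_sub_min_div_le_min_add_sub_min {a b s : ℝ} (hb : 0 < b) (hs : 0 ≤ s) (ha : 0 ≤ a)
    (hab : a ≤ b) : a * (1 - min b s / b) ≤ min b (s + a) - min b s := by
  rcases le_total b s with hbs | hsb
  · rw [min_eq_left hbs, min_eq_left (by linarith), div_self hb.ne']
    simp
  · have hfrac : 1 - s / b = (b - s) / b := by field_simp
    rw [min_eq_right hsb, hfrac]
    rcases le_total (s + a) b with hab' | hba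
    · rw [min_eq_right hab']
      have : (b - s) / b ≤ 1 := div_le_one_of_le₀ (by linarith) hb.le
      nlinarith
    · rw [min_eq_left hba, mul_div_assoc', div_le_iff₀ hb]
      nlinarith

section TruncSales

variable {b : ℝ} {Q : ℕ → ℝ} {t t' : ℕ}

lemma truncSales_le : truncSales b Q t ≤ b := min_le_left _ _

lemma truncSales_nonneg (hb : 0 ≤ b) (hQ : ∀ s < t, 0 ≤ Q s) : 0 ≤ truncSales b Q t :=
  le_min hb (sum_nonneg fun s hs => hQ s (mem_range.1 hs))

lemma truncSales_zero (hb : 0 ≤ b) : truncSales b Q 0 = 0 := by simp [truncSales, hb]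

lemma truncSales_mono (hQ : ∀ s < t', 0 ≤ Q s) (h : t ≤ t') :
    truncSales b Q t ≤ truncSales b Q t' :=
  min_le_min_left b <| sum_le_sum_of_subset_of_nonneg (range_subset_range.2 h)
    fun s hs _ => hQ s (mem_range.1 hs)

lemma mul_one_sub_truncSales_div_le_sub (hb : 0 < b) (hQ : ∀ s ≤ t, 0 ≤ Q s) (hQb : Q t ≤ b) :
    Q t * (1 - truncSales b Q t / b) ≤ truncSales b Q (t + 1) - truncSales b Q t := by
  rw [truncSales, truncSales, sum_range_succ]
  exact mul_one_sub_min_div_le_min_add_sub_min hb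
    (sum_nonneg fun s hs => hQ s (mem_range.1 hs).le) (hQ t le_rfl) hQb

end TruncSales

lemma singleItemRev_eq_sum_truncSales (b : ℝ) (T : ℕ) (P Q : ℕ → ℝ) :
    singleItemRev b T P Q = ∑ t ∈ range T, P t * (truncSales b Q (t + 1) - truncSales b Q t) :=
  rfl

lemma le_sum_mul_sub_of_mul_le_sub {T : ℕ} {P d I : ℕ → ℝ} {c θ : ℝ} (hP : ∀ t < T, c ≤ P t)
    (hI : ∀ t < T, d t * θ ≤ I (t + 1) - I t) :
    θ * ∑ t ∈ range T, (P t - c) * d t + c * (I T - I 0) ≤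
      ∑ t ∈ range T, P t * (I (t + 1) - I t) := by
  rw [← sum_range_sub, mul_sum, mul_sum, ← sum_add_distrib]
  refine sum_le_sum fun t ht => ?_
  have := mul_le_mul_of_nonneg_left (hI t (mem_range.1 ht)) (sub_nonneg.2 (hP t (mem_range.1 ht)))
  linarith

lemma sum_mul_le_of_le_of_sum_le_one {ι : Type*} {s : Finset ι} {f w : ι → ℝ} {M : ℝ}
    (hM : 0 ≤ M) (hf : ∀ i ∈ s, f i ≤ M) (hw : ∀ i ∈ s, 0 ≤ w i) (hw1 : ∑ i ∈ s, w i ≤ 1) :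
    ∑ i ∈ s, f i * w i ≤ M :=
  calc ∑ i ∈ s, f i * w i ≤ ∑ i ∈ s, M * w i :=
        sum_le_sum fun i hi => mul_le_mul_of_nonneg_right (hf i hi) (hw i hi)
    _ = M * ∑ i ∈ s, w i := (mul_sum _ _ _).symm
    _ ≤ M := mul_le_of_le_one_right hM hw1

lemma sum_sum_mul_sub_le_sum_margin {ι : Type*} {J : Finset ι} {T : ℕ} {p : ι → ℝ}
    {q x : ℕ → ι → ℝ} {j : ℕ → ι} {b c : ℝ} (hc : 0 ≤ c)
    (hx : ∀ t < T, ∀ i ∈ J, 0 ≤ x t i) (hx1 : ∀ t < T, ∑ i ∈ J, x t i ≤ 1)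
    (hxb : ∑ t ∈ range T, ∑ i ∈ J, q t i * x t i ≤ b)
    (hmargin : ∀ t < T, 0 ≤ (p (j t) - c) * q t (j t))
    (hj : ∀ t < T, ∀ i ∈ J, (p i - c) * q t i ≤ (p (j t) - c) * q t (j t)) :
    ∑ t ∈ range T, ∑ i ∈ J, p i * q t i * x t i - c * b ≤
      ∑ t ∈ range T, (p (j t) - c) * q t (j t) := by
  have hsplit : ∑ t ∈ range T, ∑ i ∈ J, (p i - c) * q t i * x t i =
      ∑ t ∈ range T, ∑ i ∈ J, p i * q t i * x t i -
        c * ∑ t ∈ range T, ∑ i ∈ J, q t i * x t i := by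
    simp only [sub_mul, sum_sub_distrib, mul_sum, mul_assoc]
  have hle : ∑ t ∈ range T, ∑ i ∈ J, (p i - c) * q t i * x t i ≤
      ∑ t ∈ range T, (p (j t) - c) * q t (j t) :=
    sum_le_sum fun t ht => have ht := mem_range.1 ht
      sum_mul_le_of_le_of_sum_le_one (hmargin t ht) (hj t ht) (hx t ht) (hx1 t ht)
  nlinarith [mul_le_mul_of_nonneg_left hxb hc]

section Expectation

variable {Ω : Type*} [MeasurableSpace Ω] {μ : Measure Ω} {b : ℝ} {Q : ℕ → Ω → ℝ} {T t : ℕ}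

lemma measurable_truncSales (hQm : ∀ s < t, Measurable (Q s)) :
    Measurable fun ω => truncSales b (Q · ω) t :=
  measurable_const.min (Finset.measurable_sum _ fun s hs => hQm s (mem_range.1 hs))

lemma integrable_truncSales [IsFiniteMeasure μ] (hb : 0 ≤ b) (hQm : ∀ s < t, Measurable (Q s))
    (hQ0 : ∀ s < t, ∀ ω, 0 ≤ Q s ω) : Integrable (fun ω => truncSales b (Q · ω) t) μ :=
  Integrable.of_bound (measurable_truncSales hQm).aestronglyMeasurable b <| ae_of_all _ fun ω => by
    rw [Real.norm_of_nonneg (truncSales_nonneg hb fun s hs => hQ0 s hs ω)]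
    exact truncSales_le

lemma indepFun_truncSales (hindep : iIndepFun (fun i : Fin T => Q i) μ)
    (hQm : ∀ s < T, Measurable (Q s)) (ht : t < T) :
    IndepFun (Q t) (fun ω => truncSales b (Q · ω) t) μ := by
  set F := (range t).attachFin fun s hs => (mem_range.1 hs).trans ht
  have hnot : (⟨t, ht⟩ : Fin T) ∉ F := by simp [F]
  have hsum : (fun ω => truncSales b (Q · ω) t) =
      (min b ·) ∘ ∑ i ∈ F, (fun i : Fin T => Q i) i := by
    funext ω
    simp only [truncSales, Function.comp_apply, Finset.sum_apply]
    rw [← map_valEmbedding_attachFin (fun s hs => (mem_range.1 hs).trans ht), sum_map]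
    rfl
  rw [hsum]
  exact (hindep.indepFun_finsetSum_of_notMem (fun i => hQm i i.2) hnot).symm.comp measurable_id
    (measurable_const.min measurable_id)

lemma integral_mul_one_sub_truncSales_div [IsProbabilityMeasure μ] (hb : 0 ≤ b)
    (hindep : iIndepFun (fun i : Fin T => Q i) μ) (hQm : ∀ s < T, Measurable (Q s))
    (hQ0 : ∀ s < T, ∀ ω, 0 ≤ Q s ω) (hQb : ∀ s < T, ∀ ω, Q s ω ≤ b) (ht : t < T) :
    ∫ ω, Q t ω * (1 - truncSales b (Q · ω) t / b) ∂μ =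
      (∫ ω, Q t ω ∂μ) * (1 - (∫ ω, truncSales b (Q · ω) t ∂μ) / b) := by
  have hQint : Integrable (Q t) μ :=
    Integrable.of_bound (hQm t ht).aestronglyMeasurable b <| ae_of_all _ fun ω => by
      rw [Real.norm_of_nonneg (hQ0 t ht ω)]
      exact hQb t ht ω
  have hWint := integrable_truncSales (μ := μ) hb (fun s hs => hQm s (hs.trans ht))
    fun s hs => hQ0 s (hs.trans ht)
  have hprod : ∫ ω, Q t ω * truncSales b (Q · ω) t ∂μ =
      (∫ ω, Q t ω ∂μ) * ∫ ω, truncSales b (Q · ω) t ∂μ :=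
    (indepFun_truncSales hindep hQm ht).integral_mul_eq_mul_integral
      (hQm t ht).aestronglyMeasurable hWint.aestronglyMeasurable
  have hQWint : Integrable (fun ω => Q t ω * truncSales b (Q · ω) t) μ :=
    hWint.bdd_mul (hQm t ht).aestronglyMeasurable (c := b) <| ae_of_all _ fun ω => by
      rw [Real.norm_of_nonneg (hQ0 t ht ω)]
      exact hQb t ht ω
  simp only [mul_sub, mul_one, mul_div_assoc']
  rw [integral_sub hQint (hQWint.div_const b), integral_div, hprod]

lemma mul_one_sub_integral_truncSales_div_le [IsProbabilityMeasure μ] (hb : 0 < b)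
    (hindep : iIndepFun (fun i : Fin T => Q i) μ) (hQm : ∀ s < T, Measurable (Q s))
    (hQ0 : ∀ s < T, ∀ ω, 0 ≤ Q s ω) (hQb : ∀ s < T, ∀ ω, Q s ω ≤ b) (ht : t < T) :
    (∫ ω, Q t ω ∂μ) * (1 - (∫ ω, truncSales b (Q · ω) T ∂μ) / b) ≤
      (∫ ω, truncSales b (Q · ω) (t + 1) ∂μ) - ∫ ω, truncSales b (Q · ω) t ∂μ := by
  have hWint : ∀ {t'}, t' ≤ T → Integrable (fun ω => truncSales b (Q · ω) t') μ := fun h =>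
    integrable_truncSales hb.le (fun s hs => hQm s (hs.trans_le h))
      fun s hs => hQ0 s (hs.trans_le h)
  have hmono : (∫ ω, truncSales b (Q · ω) t ∂μ) ≤ ∫ ω, truncSales b (Q · ω) T ∂μ :=
    integral_mono (hWint ht.le) (hWint le_rfl) fun ω => truncSales_mono (hQ0 · · ω) ht.le
  calc (∫ ω, Q t ω ∂μ) * (1 - (∫ ω, truncSales b (Q · ω) T ∂μ) / b)
      ≤ (∫ ω, Q t ω ∂μ) * (1 - (∫ ω, truncSales b (Q · ω) t ∂μ) / b) := by
        gcongr
        exact integral_nonneg (hQ0 t ht)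
    _ = ∫ ω, Q t ω * (1 - truncSales b (Q · ω) t / b) ∂μ :=
        (integral_mul_one_sub_truncSales_div hb.le hindep hQm hQ0 hQb ht).symm
    _ ≤ ∫ ω, (truncSales b (Q · ω) (t + 1) - truncSales b (Q · ω) t) ∂μ := by
        refine integral_mono_of_nonneg (ae_of_all _ fun ω => ?_) ((hWint ht).sub (hWint ht.le))
          (ae_of_all _ fun ω => ?_)
        · exact mul_nonneg (hQ0 t ht ω) (sub_nonneg.2 (div_le_one_of_le₀ truncSales_le hb.le))
        · exact mul_one_sub_truncSales_div_le_sub hb (fun s hs => hQ0 s (hs.trans_lt ht) ω)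
            (hQb t ht ω)
    _ = _ := integral_sub (hWint ht) (hWint ht.le)

lemma integral_singleItemRev [IsFiniteMeasure μ] (hb : 0 ≤ b) (hQm : ∀ s < T, Measurable (Q s))
    (hQ0 : ∀ s < T, ∀ ω, 0 ≤ Q s ω) (P : ℕ → ℝ) :
    ∫ ω, singleItemRev b T P (Q · ω) ∂μ = ∑ t ∈ range T,
      P t * ((∫ ω, truncSales b (Q · ω) (t + 1) ∂μ) - ∫ ω, truncSales b (Q · ω) t ∂μ) := by
  have hWint : ∀ {t'}, t' ≤ T → Integrable (fun ω => truncSales b (Q · ω) t') μ := fun h =>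
    integrable_truncSales hb (fun s hs => hQm s (hs.trans_le h))
      fun s hs => hQ0 s (hs.trans_le h)
  simp only [singleItemRev_eq_sum_truncSales]
  rw [integral_finsetSum (f := fun t ω => P t * (truncSales b (Q · ω) (t + 1) -
    truncSales b (Q · ω) t)) _ fun t ht => ((hWint (mem_range.1 ht)).sub
    (hWint (mem_range.1 ht).le)).const_mul _]
  refine sum_congr rfl fun t ht => ?_
  rw [integral_const_mul, integral_sub (hWint (mem_range.1 ht)) (hWint (mem_range.1 ht).le)]

end Expectation

theorem stmt_16_general {Ω : Type*} [MeasurableSpace Ω] (μ : Measure Ω) [IsProbabilityMeasure μ]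
    (T m : ℕ) (b : ℝ) (hb : 1 ≤ b)
    (p : ℕ → ℝ) (hp : ∀ j ∈ Finset.Icc 1 m, 0 < p j)
    (q : ℕ → ℕ → ℝ) (hq : ∀ t, t < T → ∀ j ∈ Finset.Icc 1 m, q t j ∈ Set.Icc (0 : ℝ) 1)
    (x : ℕ → ℕ → ℝ) (hx : ∀ t, t < T → ∀ j ∈ Finset.Icc 1 m, 0 ≤ x t j)
    (hxfeas : ∀ t, t < T → ∑ j ∈ Finset.Icc 1 m, x t j ≤ 1)
    (hxinv : ∑ t ∈ Finset.range T, ∑ j ∈ Finset.Icc 1 m, q t j * x t j ≤ b)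
    (r : ℝ) (hr : r = ∑ t ∈ Finset.range T, ∑ j ∈ Finset.Icc 1 m, p j * q t j * x t j)
    (jt : ℕ → ℕ)
    (hthresh : ∀ t, t < T → r / (2 * b) ≤ p (jt t))
    (hargmax : ∀ t, t < T → ∀ j ∈ Finset.Icc 1 m,
      (p j - r / (2 * b)) * q t j ≤ (p (jt t) - r / (2 * b)) * q t (jt t))
    (Q : ℕ → Ω → ℝ) (hQmeas : ∀ t, t < T → Measurable (Q t))
    (hQindep : iIndepFun (fun i : Fin T => Q i) μ)
    (hQrange : ∀ t, t < T → ∀ ω, Q t ω ∈ Set.Icc (0 : ℝ) 1)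
    (hQmean : ∀ t, t < T → ∫ ω, Q t ω ∂μ = q t (jt t)) :
    r / 2 ≤ ∫ ω, singleItemRev b T (fun t => p (jt t)) (fun t => Q t ω) ∂μ := by
  have hb0 : 0 < b := one_pos.trans_le hb
  have hQ0 : ∀ t < T, ∀ ω, 0 ≤ Q t ω := fun t ht ω => (hQrange t ht ω).1
  have hQb : ∀ t < T, ∀ ω, Q t ω ≤ b := fun t ht ω => (hQrange t ht ω).2.trans hb
  set c := r / (2 * b) with hc
  set I : ℕ → ℝ := fun t => ∫ ω, truncSales b (Q · ω) t ∂μ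
  have hr0 : 0 ≤ r := hr ▸ sum_nonneg fun t ht => sum_nonneg fun j hj =>
    have ht := mem_range.1 ht
    mul_nonneg (mul_nonneg (hp j hj).le (hq t ht j hj).1) (hx t ht j hj)
  have hI0 : I 0 = 0 := by simp [I, truncSales_zero hb0.le]
  have hIT : I T ≤ b := by
    simpa using integral_mono (integrable_truncSales (μ := μ) hb0.le hQmeas hQ0)
      (integrable_const b) fun ω => truncSales_le
  have hLP : r - c * b ≤ ∑ t ∈ range T, (p (jt t) - c) * q t (jt t) :=
    hr ▸ sum_sum_mul_sub_le_sum_margin (by positivity) hx hxfeas hxinv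
      (fun t ht => mul_nonneg (sub_nonneg.2 (hthresh t ht))
        (hQmean t ht ▸ integral_nonneg (hQ0 t ht))) hargmax
  have hrev := le_sum_mul_sub_of_mul_le_sub (I := I) (θ := 1 - I T / b) hthresh fun t ht =>
    hQmean t ht ▸ mul_one_sub_integral_truncSales_div_le hb0 hQindep hQmeas hQ0 hQb ht
  rw [integral_singleItemRev hb0.le hQmeas hQ0]
  calc r / 2 = (1 - I T / b) * (r - c * b) + c * (I T - I 0) := by
        rw [hI0, hc]; field_simp; ring
    _ ≤ (1 - I T / b) * ∑ t ∈ range T, (p (jt t) - c) * q t (jt t) + c * (I T - I 0) := by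
        gcongr
        exact sub_nonneg.2 (div_le_one_of_le₀ hIT hb0.le)
    _ ≤ _ := hrev

/-- single-item non-stationary pricing with a bid-price calendar.  Prices are
indexed by `j ∈ {1,…,m}`, periods by `t ∈ {0,…,T-1}`.  Given a DLP-N feasible solution `x` with
value `r* = Σ_{t,j} p_j q_{t,j} x_{t,j}` and bid price `c = r*/(2b)`, if in each period `t` the
offered price index `j_t` satisfies `p_{j_t} ≥ c` and maximizes `(p_j − c)·q_{t,j}`, then the
resulting static calendar earns expected revenue at least `r*/2`. -/
theorem stmt_16 {Ω : Type*} [MeasurableSpace Ω] (μ : Measure Ω) [IsProbabilityMeasure μ]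
    (T m : ℕ) (hT : 0 < T) (hm : 0 < m) (b : ℝ) (hb : 1 ≤ b)
    (p : ℕ → ℝ) (hp : ∀ j ∈ Finset.Icc 1 m, 0 < p j)
    (q : ℕ → ℕ → ℝ) (hq : ∀ t, t < T → ∀ j ∈ Finset.Icc 1 m, q t j ∈ Set.Icc (0 : ℝ) 1)
    (x : ℕ → ℕ → ℝ) (hx : ∀ t, t < T → ∀ j ∈ Finset.Icc 1 m, 0 ≤ x t j)
    (hxfeas : ∀ t, t < T → ∑ j ∈ Finset.Icc 1 m, x t j ≤ 1)
    (hxinv : ∑ t ∈ Finset.range T, ∑ j ∈ Finset.Icc 1 m, q t j * x t j ≤ b)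
    (r : ℝ) (hr : r = ∑ t ∈ Finset.range T, ∑ j ∈ Finset.Icc 1 m, p j * q t j * x t j)
    (jt : ℕ → ℕ) (hjt : ∀ t, t < T → jt t ∈ Finset.Icc 1 m)
    (hthresh : ∀ t, t < T → r / (2 * b) ≤ p (jt t))
    (hargmax : ∀ t, t < T → ∀ j ∈ Finset.Icc 1 m,
      (p j - r / (2 * b)) * q t j ≤ (p (jt t) - r / (2 * b)) * q t (jt t))
    (Q : ℕ → Ω → ℝ) (hQmeas : ∀ t, t < T → Measurable (Q t))
    (hQindep : iIndepFun (fun i : Fin T => Q i) μ)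
    (hQrange : ∀ t, t < T → ∀ ω, Q t ω ∈ Set.Icc (0 : ℝ) 1)
    (hQmean : ∀ t, t < T → ∫ ω, Q t ω ∂μ = q t (jt t)) :
    r / 2 ≤ ∫ ω, singleItemRev b T (fun t => p (jt t)) (fun t => Q t ω) ∂μ :=
  stmt_16_general μ T m b hb p hp q hq x hx hxfeas hxinv r hr jt hthresh hargmax Q hQmeas hQindep
    hQrange hQmean
end

section
/- Let b ≥ 6 be a real number and set δ = √(3·ln(b)/b). Let Q_1, …, Q_T be independent random variables taking values in [0,1] with Σ_{t=1}^T E[Q_t] ≤ (1 − δ)·b. Then P(Σ_{t=1}^T Q_t ≥ b) ≤ 1/b. -/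
/-!
Chernoff's bound: for independent `[0,1]`-valued `Q t`, convexity of `exp` gives
`E[exp (s Q)] ≤ exp ((eˢ - 1) E[Q])`, so Markov's inequality applied to `exp (s ∑ Q)` with
`s = -log (1 - δ)` bounds `P(∑ Q ≥ b)` by `exp (b (δ + log (1 - δ))) ≤ exp (-δ² b / 2)`.
The choice of `δ` makes this `b ^ (-3/2) ≤ 1 / b`.
-/

open MeasureTheory ProbabilityTheory Real Set

lemma Real.log_one_sub_le_neg_sub_sq_div_two {x : ℝ} (hx0 : 0 ≤ x) (hx1 : x < 1) :
    log (1 - x) ≤ -x - x ^ 2 / 2 := by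
  have hsum := hasSum_pow_div_log_of_abs_lt_one (abs_lt.2 ⟨by linarith, hx1⟩)
  have h := sum_le_hasSum (Finset.range 2) (fun n _ => by positivity) hsum
  norm_num [Finset.sum_range_succ] at h
  linarith

lemma Real.three_mul_log_lt_self {b : ℝ} (hb : 6 ≤ b) : 3 * log b < b := by
  have hlog6 : log 6 < 2 := by
    have h6 : (6 : ℝ) < exp 2 := by
      rw [show (2 : ℝ) = 1 + 1 by norm_num, exp_add]
      nlinarith [exp_one_gt_d9]
    simpa using log_lt_log (by norm_num) h6
  have hsplit : log b = log 6 + log (b / 6) := by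
    rw [log_div (by linarith) (by norm_num)]; ring
  linarith [log_le_sub_one_of_pos (show 0 < b / 6 by linarith)]

lemma Real.exp_mul_le_one_add_mul_of_mem_Icc {x : ℝ} (hx : x ∈ Icc (0 : ℝ) 1) (t : ℝ) :
    exp (t * x) ≤ 1 + (exp t - 1) * x := by
  have h := convexOn_exp.2 (mem_univ 0) (mem_univ t) (sub_nonneg.2 hx.2) hx.1 (by ring)
  simp only [smul_eq_mul, mul_zero, zero_add, exp_zero, mul_one] at h
  rw [mul_comm t x]; linarith

namespace ProbabilityTheory

variable {Ω : Type*} [MeasurableSpace Ω] {μ : Measure Ω} [IsProbabilityMeasure μ]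

lemma mgf_le_exp_mul_integral_of_mem_Icc {X : Ω → ℝ} (hX : AEMeasurable X μ)
    (hX01 : ∀ᵐ ω ∂μ, X ω ∈ Icc (0 : ℝ) 1) (t : ℝ) :
    mgf X μ t ≤ exp ((exp t - 1) * μ[X]) := by
  have hXint : Integrable X μ := .of_mem_Icc 0 1 hX hX01
  calc mgf X μ t = ∫ ω, exp (t * X ω) ∂μ := rfl
    _ ≤ ∫ ω, (1 + (exp t - 1) * X ω) ∂μ := by
        refine integral_mono_ae (integrable_exp_mul_of_mem_Icc hX hX01)
          ((integrable_const 1).add (hXint.const_mul _)) ?_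
        filter_upwards [hX01] with ω hω using exp_mul_le_one_add_mul_of_mem_Icc hω t
    _ = (exp t - 1) * μ[X] + 1 := by
        rw [integral_add (integrable_const 1) (hXint.const_mul _), integral_const_mul]
        simp [add_comm]
    _ ≤ exp ((exp t - 1) * μ[X]) := add_one_le_exp _

variable {ι : Type*} {X : ι → Ω → ℝ}

lemma iIndepFun.mgf_sum_le_of_mem_Icc (hindep : iIndepFun X μ)
    (hX : ∀ i, AEMeasurable (X i) μ) (hX01 : ∀ i, ∀ᵐ ω ∂μ, X i ω ∈ Icc (0 : ℝ) 1)
    (s : Finset ι) (t : ℝ) :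
    mgf (∑ i ∈ s, X i) μ t ≤ exp ((exp t - 1) * ∑ i ∈ s, μ[X i]) := by
  rw [hindep.mgf_sum₀ hX s, Finset.mul_sum, exp_sum]
  exact Finset.prod_le_prod (fun _ _ => mgf_nonneg)
    fun i _ => mgf_le_exp_mul_integral_of_mem_Icc (hX i) (hX01 i) t

lemma iIndepFun.measureReal_sum_ge_le_of_mem_Icc (hindep : iIndepFun X μ)
    (hX : ∀ i, AEMeasurable (X i) μ) (hX01 : ∀ i, ∀ᵐ ω ∂μ, X i ω ∈ Icc (0 : ℝ) 1)
    (s : Finset ι) (a : ℝ) {t : ℝ} (ht : 0 ≤ t) :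
    μ.real {ω | a ≤ ∑ i ∈ s, X i ω} ≤ exp (-t * a + (exp t - 1) * ∑ i ∈ s, μ[X i]) := by
  have hS_le : ∀ᵐ ω ∂μ, (∑ i ∈ s, X i) ω ≤ s.card := by
    filter_upwards [(Filter.eventually_all_finset s).2 fun i _ => hX01 i] with ω hω
    simpa [Finset.sum_apply] using Finset.sum_le_card_nsmul s _ 1 fun i hi => (hω i hi).2
  have hint := integrable_exp_mul_of_le t _ ht (by fun_prop) hS_le
  calc μ.real {ω | a ≤ ∑ i ∈ s, X i ω}
      = μ.real {ω | a ≤ (∑ i ∈ s, X i) ω} := by simp only [Finset.sum_apply]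
    _ ≤ exp (-t * a) * mgf (∑ i ∈ s, X i) μ t := measure_ge_le_exp_mul_mgf a ht hint
    _ ≤ exp (-t * a) * exp ((exp t - 1) * ∑ i ∈ s, μ[X i]) :=
        mul_le_mul_of_nonneg_left (hindep.mgf_sum_le_of_mem_Icc hX hX01 s t) (exp_pos _).le
    _ = exp (-t * a + (exp t - 1) * ∑ i ∈ s, μ[X i]) := (exp_add _ _).symm

lemma iIndepFun.measureReal_sum_ge_le_exp_neg_sq_mul (hindep : iIndepFun X μ)
    (hX : ∀ i, AEMeasurable (X i) μ) (hX01 : ∀ i, ∀ᵐ ω ∂μ, X i ω ∈ Icc (0 : ℝ) 1)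
    (s : Finset ι) {b δ : ℝ} (hb : 0 ≤ b) (hδ0 : 0 ≤ δ) (hδ1 : δ < 1)
    (hmean : ∑ i ∈ s, μ[X i] ≤ (1 - δ) * b) :
    μ.real {ω | b ≤ ∑ i ∈ s, X i ω} ≤ exp (-(δ ^ 2 * b / 2)) := by
  have h1δ : 0 < 1 - δ := by linarith
  have ht : 0 ≤ -log (1 - δ) := neg_nonneg.2 (log_nonpos h1δ.le (by linarith))
  have hexp : exp (-log (1 - δ)) - 1 = δ / (1 - δ) := by
    rw [exp_neg, exp_log h1δ]; field_simp; ring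
  refine (hindep.measureReal_sum_ge_le_of_mem_Icc hX hX01 s b ht).trans (exp_le_exp.2 ?_)
  rw [hexp]
  have hmean' : δ / (1 - δ) * ∑ i ∈ s, μ[X i] ≤ δ * b := by
    calc δ / (1 - δ) * ∑ i ∈ s, μ[X i] ≤ δ / (1 - δ) * ((1 - δ) * b) := by gcongr
      _ = δ * b := by field_simp
  nlinarith [log_one_sub_le_neg_sub_sq_div_two hδ0 hδ1]

end ProbabilityTheory

/-- let `b ≥ 6` and `δ = √(3·ln b / b)`.  If `Q 0, …, Q (T-1)` are independent
random variables with values in `[0,1]` and `Σ_t E[Q t] ≤ (1 − δ)·b`, then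
`P(Σ_t Q t ≥ b) ≤ 1/b`. -/
theorem stmt_18 {Ω : Type*} [MeasurableSpace Ω] (μ : Measure Ω) [IsProbabilityMeasure μ]
    (b : ℝ) (hb : 6 ≤ b) (δ : ℝ) (hδ : δ = Real.sqrt (3 * Real.log b / b))
    (T : ℕ) (Q : ℕ → Ω → ℝ)
    (hQmeas : ∀ t, t < T → Measurable (Q t))
    (hQindep : iIndepFun (fun i : Fin T => Q i) μ)
    (hQrange : ∀ t, t < T → ∀ ω, Q t ω ∈ Set.Icc (0 : ℝ) 1)
    (hmean : ∑ t ∈ Finset.range T, ∫ ω, Q t ω ∂μ ≤ (1 - δ) * b) :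
    μ {ω | b ≤ ∑ t ∈ Finset.range T, Q t ω} ≤ ENNReal.ofReal (1 / b) := by
  have hb0 : 0 < b := by linarith
  have hlogb : 0 < log b := log_pos (by linarith)
  have hδsq : δ ^ 2 = 3 * log b / b := by rw [hδ]; exact sq_sqrt (by positivity)
  have hδ0 : 0 ≤ δ := hδ ▸ sqrt_nonneg _
  have hδ1 : δ < 1 := by
    have : δ ^ 2 < 1 := by rw [hδsq, div_lt_one hb0]; exact three_mul_log_lt_self hb
    nlinarith
  have hchernoff := hQindep.measureReal_sum_ge_le_exp_neg_sq_mul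
    (fun i => (hQmeas i i.isLt).aemeasurable) (fun i => ae_of_all _ (hQrange i i.isLt))
    Finset.univ hb0.le hδ0 hδ1 (by simpa only [Finset.sum_range] using hmean)
  rw [← ofReal_measureReal]
  simp only [Finset.sum_range]
  refine ENNReal.ofReal_le_ofReal (hchernoff.trans ?_)
  calc exp (-(δ ^ 2 * b / 2)) ≤ exp (-log b) := by
        rw [hδsq, div_mul_cancel₀ _ hb0.ne']; gcongr; linarith
    _ = 1 / b := by rw [exp_neg, exp_log hb0, one_div]
end
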